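/- If Ψ : B ⊗ A → A ⊗ B is a linear map between (tensor products of) associative unital k-algebras A and B satisfying Ψ∘(id_B ⊗ m_A) = (m_A ⊗ id_B)∘(id_A ⊗ Ψ)∘(Ψ ⊗ id_A), Ψ∘(m_B ⊗ id_A) = (id_A ⊗ m_B)∘(Ψ ⊗ id_B)∘(id_B ⊗ Ψ), Ψ(b ⊗ 1) = 1 ⊗ b and Ψ(1 ⊗ a) = a ⊗ 1, then the multiplication m_Ψ := (m_A ⊗ m_B)∘(id_A ⊗ Ψ ⊗ id_B) on A ⊗ B is associative. -/
import Mathlib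


open TensorProduct LinearMap

set_option maxHeartbeats 1000000
set_option synthInstance.maxHeartbeats 400000

variable (k : Type) [Field k]
variable (A B : Type) [Ring A] [Algebra k A] [Ring B] [Algebra k B]

/-- The crossed-product multiplication `m_Ψ := (m_A ⊗ m_B) ∘ (id_A ⊗ Ψ ⊗ id_B)`
on `A ⊗ B`. -/
noncomputable def mPsi (Ψ : B ⊗[k] A →ₗ[k] A ⊗[k] B) :
    (A ⊗[k] B) ⊗[k] (A ⊗[k] B) →ₗ[k] A ⊗[k] B :=
  TensorProduct.map (LinearMap.mul' k A) (LinearMap.mul' k B)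
    ∘ₗ (TensorProduct.assoc k A A (B ⊗[k] B)).symm.toLinearMap
    ∘ₗ LinearMap.lTensor A (TensorProduct.assoc k A B B).toLinearMap
    ∘ₗ LinearMap.lTensor A (LinearMap.rTensor B Ψ)
    ∘ₗ LinearMap.lTensor A (TensorProduct.assoc k B A B).symm.toLinearMap
    ∘ₗ (TensorProduct.assoc k A B (A ⊗[k] B)).toLinearMap

lemma mPsi_tmul (Ψ : B ⊗[k] A →ₗ[k] A ⊗[k] B) (a a' : A) (b b' : B) :
    mPsi k A B Ψ ((a ⊗ₜ b) ⊗ₜ (a' ⊗ₜ b')) =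
      TensorProduct.map (LinearMap.mulLeft k a) (LinearMap.mulRight k b') (Ψ (b ⊗ₜ a')) := by
  simp only [mPsi, coe_comp, Function.comp_apply, LinearEquiv.coe_coe, assoc_tmul,
    lTensor_tmul, assoc_symm_tmul, rTensor_tmul]
  generalize Ψ (b ⊗ₜ a') = t
  induction t using TensorProduct.induction_on with
  | zero => simp
  | tmul x y =>
      simp [mul'_apply, mul_assoc]
  | add s t hs ht =>
      simp only [tmul_add, add_tmul, map_add, hs, ht]

lemma mPsi_left (Ψ : B ⊗[k] A →ₗ[k] A ⊗[k] B)
    (h2 : ∀ (b b' : B) (a : A),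
      Ψ ((b * b') ⊗ₜ a) =
        TensorProduct.map LinearMap.id (LinearMap.mul' k B)
          (TensorProduct.assoc k A B B
            (LinearMap.rTensor B Ψ
              ((TensorProduct.assoc k B A B).symm
                (LinearMap.lTensor B Ψ (b ⊗ₜ (b' ⊗ₜ a)))))))
    (a1 a3 : A) (b2 b3 : B) (s : A ⊗[k] B) :
    mPsi k A B Ψ
        ((TensorProduct.map (LinearMap.mulLeft k a1) (LinearMap.mulRight k b2) s)
          ⊗ₜ (a3 ⊗ₜ b3)) =
      TensorProduct.map (LinearMap.mulLeft k a1) (LinearMap.mulRight k b3)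
        (mPsi k A B Ψ (s ⊗ₜ Ψ (b2 ⊗ₜ a3))) := by
  induction s using TensorProduct.induction_on with
  | zero => simp
  | tmul u v =>
      simp only [map_tmul, mulLeft_apply, mulRight_apply, mPsi_tmul, h2 v b2 a3,
        lTensor_tmul]
      generalize Ψ (b2 ⊗ₜ a3) = t
      induction t using TensorProduct.induction_on with
      | zero => simp
      | tmul p q =>
          simp only [assoc_symm_tmul, rTensor_tmul, assoc_tmul, map_tmul, mPsi_tmul]
          generalize Ψ (v ⊗ₜ p) = w
          induction w using TensorProduct.induction_on with
          | zero => simp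
          | tmul x y => simp [mul'_apply, mul_assoc]
          | add w1 w2 hw1 hw2 => simp only [map_add, tmul_add, add_tmul, hw1, hw2]
      | add t1 t2 ht1 ht2 => simp only [tmul_add, map_add, ht1, ht2]
  | add s1 s2 hs1 hs2 => simp only [map_add, add_tmul, hs1, hs2]

lemma mPsi_right (Ψ : B ⊗[k] A →ₗ[k] A ⊗[k] B)
    (h1 : ∀ (b : B) (a a' : A),
      Ψ (b ⊗ₜ (a * a')) =
        TensorProduct.map (LinearMap.mul' k A) LinearMap.id
          ((TensorProduct.assoc k A A B).symm
            (LinearMap.lTensor A Ψ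
              (TensorProduct.assoc k A B A
                (LinearMap.rTensor A Ψ ((b ⊗ₜ a) ⊗ₜ a'))))))
    (a1 a2 : A) (b1 b3 : B) (t : A ⊗[k] B) :
    mPsi k A B Ψ
        ((a1 ⊗ₜ b1) ⊗ₜ
          (TensorProduct.map (LinearMap.mulLeft k a2) (LinearMap.mulRight k b3) t)) =
      TensorProduct.map (LinearMap.mulLeft k a1) (LinearMap.mulRight k b3)
        (mPsi k A B Ψ (Ψ (b1 ⊗ₜ a2) ⊗ₜ t)) := by
  induction t using TensorProduct.induction_on with
  | zero => simp
  | tmul p q =>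
      simp only [map_tmul, mulLeft_apply, mulRight_apply, mPsi_tmul, h1 b1 a2 p,
        rTensor_tmul]
      generalize Ψ (b1 ⊗ₜ a2) = s
      induction s using TensorProduct.induction_on with
      | zero => simp
      | tmul u v =>
          simp only [assoc_tmul, lTensor_tmul, mPsi_tmul]
          generalize Ψ (v ⊗ₜ p) = w
          induction w using TensorProduct.induction_on with
          | zero => simp
          | tmul x y => simp [mul'_apply, mul_assoc]
          | add w1 w2 hw1 hw2 => simp only [map_add, tmul_add, add_tmul, hw1, hw2]
      | add s1 s2 hs1 hs2 => simp only [add_tmul, map_add, hs1, hs2]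
  | add t1 t2 ht1 ht2 => simp only [map_add, tmul_add, ht1, ht2]

/-- if `Ψ : B ⊗ A → A ⊗ B` is an algebra cross (twist), then the
crossed-product multiplication `m_Ψ` on `A ⊗ B` is associative. -/
theorem mPsi_assoc (Ψ : B ⊗[k] A →ₗ[k] A ⊗[k] B)
    (h1 : ∀ (b : B) (a a' : A),
      Ψ (b ⊗ₜ (a * a')) =
        TensorProduct.map (LinearMap.mul' k A) LinearMap.id
          ((TensorProduct.assoc k A A B).symm
            (LinearMap.lTensor A Ψ
              (TensorProduct.assoc k A B A
                (LinearMap.rTensor A Ψ ((b ⊗ₜ a) ⊗ₜ a'))))))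
    (h2 : ∀ (b b' : B) (a : A),
      Ψ ((b * b') ⊗ₜ a) =
        TensorProduct.map LinearMap.id (LinearMap.mul' k B)
          (TensorProduct.assoc k A B B
            (LinearMap.rTensor B Ψ
              ((TensorProduct.assoc k B A B).symm
                (LinearMap.lTensor B Ψ (b ⊗ₜ (b' ⊗ₜ a)))))))
    (h3 : ∀ b : B, Ψ (b ⊗ₜ (1 : A)) = (1 : A) ⊗ₜ b)
    (h4 : ∀ a : A, Ψ ((1 : B) ⊗ₜ a) = a ⊗ₜ (1 : B)) :
    ∀ x y z : A ⊗[k] B,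
      mPsi k A B Ψ (mPsi k A B Ψ (x ⊗ₜ y) ⊗ₜ z) =
        mPsi k A B Ψ (x ⊗ₜ mPsi k A B Ψ (y ⊗ₜ z)) := by
  intro x y z
  induction x using TensorProduct.induction_on with
  | zero => simp
  | add x1 x2 hx1 hx2 => simp only [add_tmul, map_add, tmul_add, hx1, hx2]
  | tmul a1 b1 =>
    induction y using TensorProduct.induction_on with
    | zero => simp
    | add y1 y2 hy1 hy2 => simp only [add_tmul, tmul_add, map_add, hy1, hy2]
    | tmul a2 b2 =>
      induction z using TensorProduct.induction_on with
      | zero => simp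
      | add z1 z2 hz1 hz2 => simp only [tmul_add, map_add, hz1, hz2]
      | tmul a3 b3 =>
        rw [mPsi_tmul, mPsi_tmul, mPsi_left k A B Ψ h2, mPsi_right k A B Ψ h1]
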